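/- arXiv:2504.18356 — 2 statements merged into one kernel-verified Lean document; each statement's English description precedes it below -/
import Mathlib

section
/- Let Λ > 0, κ > 0, α ∈ ℝ, and for n ∈ ℤ set αₙ = α + 2πn/Λ. Let I ⊆ ℝ be an open interval and let p : ℝ × I → ℂ be twice continuously differentiable, satisfy the Helmholtz equation Δp + κ² p = 0 on ℝ × I, and be α-quasi-periodic: p(x + Λ, y) = e^{iαΛ} p(x, y) for all x ∈ ℝ, y ∈ I. Define the n-th Fourier coefficient p̂ₙ(y) = (1/Λ) ∫₀^Λ p(x, y) e^{−i αₙ x} dx. Then for every n ∈ ℤ and every y ∈ I, p̂ₙ is twice differentiable and p̂ₙ''(y) + (κ² − αₙ²) p̂ₙ(y) = 0. -/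
/-!
Multiplying `p` by `e^{-iαₙx}` and integrating over one period commutes with `∂_y` (the integrand
is `C²` in `y`, dominated on compact strips), so `p̂ₙ'' = (1/Λ) ∫ ∂_y²p · e^{-iαₙx}`. By Helmholtz,
`∂_y²p = -∂_x²p - κ²p`, and integrating `∂_x²p · e^{-iαₙx}` by parts twice produces no boundary
terms: both `p` and `∂_x p` pick up the factor `e^{iαΛ}` over a period, which `e^{-iαₙΛ}` cancels.
Each integration by parts contributes a factor `iαₙ`, giving `∫ ∂_x²p · e^{-iαₙx} = -αₙ² Λ p̂ₙ`.
-/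

noncomputable section

/-- Partial derivative in the first (x) variable. -/
def pdx (p : ℝ × ℝ → ℂ) (z : ℝ × ℝ) : ℂ := deriv (fun x => p (x, z.2)) z.1

/-- Partial derivative in the second (y) variable. -/
def pdy (p : ℝ × ℝ → ℂ) (z : ℝ × ℝ) : ℂ := deriv (fun y => p (z.1, y)) z.2

/-- Laplacian of a scalar function. -/
def lap (p : ℝ × ℝ → ℂ) (z : ℝ × ℝ) : ℂ := pdx (pdx p) z + pdy (pdy p) z

/-- Gradient of a scalar function. -/
def grad (p : ℝ × ℝ → ℂ) (z : ℝ × ℝ) : ℂ × ℂ := (pdx p z, pdy p z)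

/-- Vector curl of a scalar function: `curl p = (∂_y p, −∂ₓ p)`. -/
def vcurl (p : ℝ × ℝ → ℂ) (z : ℝ × ℝ) : ℂ × ℂ := (pdy p z, -pdx p z)

/-- Divergence of a vector field. -/
def div2 (u : ℝ × ℝ → ℂ × ℂ) (z : ℝ × ℝ) : ℂ :=
  pdx (fun w => (u w).1) z + pdy (fun w => (u w).2) z

/-- Componentwise vector Laplacian. -/
def vecLap (u : ℝ × ℝ → ℂ × ℂ) (z : ℝ × ℝ) : ℂ × ℂ :=
  (lap (fun w => (u w).1) z, lap (fun w => (u w).2) z)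

open MeasureTheory Set Complex

section PartialDerivatives

variable {p : ℝ × ℝ → ℂ} {s : Set (ℝ × ℝ)}

theorem hasDerivAt_pdx {z : ℝ × ℝ} (h : DifferentiableAt ℝ p z) :
    HasDerivAt (fun x => p (x, z.2)) (pdx p z) z.1 :=
  (h.comp z.1 (differentiableAt_id.prodMk (differentiableAt_const _))).hasDerivAt

theorem hasDerivAt_pdy {z : ℝ × ℝ} (h : DifferentiableAt ℝ p z) :
    HasDerivAt (fun y => p (z.1, y)) (pdy p z) z.2 :=
  (h.comp z.2 ((differentiableAt_const _).prodMk differentiableAt_id)).hasDerivAt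

theorem pdx_eqOn_fderiv (hs : IsOpen s) (hp : DifferentiableOn ℝ p s) :
    EqOn (pdx p) (fun z => fderiv ℝ p z (1, 0)) s := fun z hz =>
  ((hp.differentiableAt (hs.mem_nhds hz)).hasFDerivAt.comp_hasDerivAt z.1
    ((hasDerivAt_id z.1).prodMk (hasDerivAt_const z.1 z.2))).deriv

theorem pdy_eqOn_fderiv (hs : IsOpen s) (hp : DifferentiableOn ℝ p s) :
    EqOn (pdy p) (fun z => fderiv ℝ p z (0, 1)) s := fun z hz =>
  ((hp.differentiableAt (hs.mem_nhds hz)).hasFDerivAt.comp_hasDerivAt z.2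
    ((hasDerivAt_const z.2 z.1).prodMk (hasDerivAt_id z.2))).deriv

theorem contDiffOn_pdx {m n : WithTop ℕ∞} (hs : IsOpen s) (hp : ContDiffOn ℝ n p s)
    (hmn : m + 1 ≤ n) : ContDiffOn ℝ m (pdx p) s :=
  ((hp.fderiv_of_isOpen hs hmn).clm_apply contDiffOn_const).congr
    (pdx_eqOn_fderiv hs (hp.differentiableOn (zero_lt_one.trans_le (le_add_self.trans hmn)).ne'))

theorem contDiffOn_pdy {m n : WithTop ℕ∞} (hs : IsOpen s) (hp : ContDiffOn ℝ n p s)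
    (hmn : m + 1 ≤ n) : ContDiffOn ℝ m (pdy p) s :=
  ((hp.fderiv_of_isOpen hs hmn).clm_apply contDiffOn_const).congr
    (pdy_eqOn_fderiv hs (hp.differentiableOn (zero_lt_one.trans_le (le_add_self.trans hmn)).ne'))

theorem pdy_mul_comp_fst (p : ℝ × ℝ → ℂ) (g : ℝ → ℂ) :
    pdy (fun z => p z * g z.1) = fun z => pdy p z * g z.1 :=
  funext fun z => deriv_mul_const_field (u := fun y => p (z.1, y)) (g z.1)

theorem pdx_add_period {Λ y : ℝ} {c : ℂ} (h : ∀ x, p (x + Λ, y) = c * p (x, y)) (x : ℝ) :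
    pdx p (x + Λ, y) = c * pdx p (x, y) := by
  simp only [pdx]
  rw [← deriv_comp_add_const, funext h, deriv_const_mul_field]

end PartialDerivatives

theorem ContinuousOn.continuous_comp_mk_left {E : Type*} [TopologicalSpace E] {r : ℝ × ℝ → E}
    {U : Set ℝ} (hr : ContinuousOn r (univ ×ˢ U)) {y : ℝ} (hy : y ∈ U) :
    Continuous fun x => r (x, y) :=
  hr.comp_continuous (continuous_id.prodMk continuous_const) fun _ => ⟨trivial, hy⟩

theorem hasDerivAt_intervalIntegral_pdy {q : ℝ × ℝ → ℂ} {U : Set ℝ} (hU : IsOpen U)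
    (hq : ContDiffOn ℝ 1 q (univ ×ˢ U)) (a b : ℝ) {y₀ : ℝ} (hy₀ : y₀ ∈ U) :
    HasDerivAt (fun y => ∫ x in a..b, q (x, y)) (∫ x in a..b, pdy q (x, y₀)) y₀ := by
  have hS : IsOpen ((univ : Set ℝ) ×ˢ U) := isOpen_univ.prod hU
  obtain ⟨K, hK, hy₀K, hKU⟩ := exists_compact_subset hU hy₀
  have hq' : ContinuousOn (pdy q) (univ ×ˢ U) :=
    (contDiffOn_pdy (m := 0) hS hq (by norm_num)).continuousOn
  obtain ⟨M, hM⟩ := (isCompact_uIcc.prod hK).exists_bound_of_continuousOn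
    (hq'.mono (prod_mono (subset_univ _) hKU))
  refine (intervalIntegral.hasDerivAt_integral_of_dominated_loc_of_deriv_le
    (F := fun y x => q (x, y)) (F' := fun y x => pdy q (x, y)) (μ := volume)
    (bound := fun _ => M) (isOpen_interior.mem_nhds hy₀K) ?_ ?_ ?_ ?_ intervalIntegrable_const ?_).2
  · filter_upwards [hU.mem_nhds hy₀] with y hy
    exact (hq.continuousOn.continuous_comp_mk_left hy).aestronglyMeasurable
  · exact (hq.continuousOn.continuous_comp_mk_left hy₀).intervalIntegrable _ _
  · exact (hq'.continuous_comp_mk_left hy₀).aestronglyMeasurable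
  · exact .of_forall fun x hx y hy =>
      hM (x, y) ⟨uIoc_subset_uIcc hx, interior_subset hy⟩
  · exact .of_forall fun x _ y hy => hasDerivAt_pdy (z := (x, y))
      ((hq.differentiableOn one_ne_zero).differentiableAt
        (hS.mem_nhds ⟨trivial, hKU (interior_subset hy)⟩))

theorem integral_deriv_mul_cexp_of_quasiPeriodic {f f' : ℝ → ℂ} {Λ : ℝ} {m c : ℂ}
    (hf : ∀ x ∈ uIcc 0 Λ, HasDerivAt f (f' x) x) (hf' : IntervalIntegrable f' volume 0 Λ)
    (hper : f Λ = c * f 0) (hc : cexp (m * Λ) * c = 1) :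
    ∫ x in 0..Λ, f' x * cexp (m * x) = -m * ∫ x in 0..Λ, f x * cexp (m * x) := by
  have he : ∀ x ∈ uIcc 0 Λ, HasDerivAt (fun x : ℝ => cexp (m * x)) (m * cexp (m * x)) x :=
    fun x _ => by simpa [mul_comm] using ((hasDerivAt_id (x : ℂ)).const_mul m).cexp.comp_ofReal
  have hibp := intervalIntegral.integral_mul_deriv_eq_deriv_mul he hf
    ((continuous_const.mul (by fun_prop)).intervalIntegrable _ _) hf'
  have hlast : ∫ x in 0..Λ, m * cexp (m * x) * f x = m * ∫ x in 0..Λ, f x * cexp (m * x) := by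
    rw [← intervalIntegral.integral_const_mul]
    exact intervalIntegral.integral_congr fun x _ => by ring
  calc ∫ x in 0..Λ, f' x * cexp (m * x) = ∫ x in 0..Λ, cexp (m * x) * f' x :=
        intervalIntegral.integral_congr fun x _ => mul_comm _ _
    _ = -m * ∫ x in 0..Λ, f x * cexp (m * x) := by
        rw [hibp, hlast, hper, ← mul_assoc, hc]
        simp

section Strip

variable {p : ℝ × ℝ → ℂ} {U : Set ℝ} {y Λ : ℝ} {m c : ℂ}

theorem continuous_pdx_pdx_comp_mk_left (hU : IsOpen U) (hp : ContDiffOn ℝ 2 p (univ ×ˢ U))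
    (hy : y ∈ U) : Continuous fun x => pdx (pdx p) (x, y) :=
  have hS : IsOpen ((univ : Set ℝ) ×ˢ U) := isOpen_univ.prod hU
  (contDiffOn_pdx (m := 0) hS (contDiffOn_pdx (m := 1) hS hp le_rfl) le_rfl).continuousOn
    |>.continuous_comp_mk_left hy

theorem integral_pdx_pdx_mul_cexp (hU : IsOpen U) (hp : ContDiffOn ℝ 2 p (univ ×ˢ U))
    (hy : y ∈ U) (hper : ∀ x, p (x + Λ, y) = c * p (x, y)) (hc : cexp (m * Λ) * c = 1) :
    ∫ x in 0..Λ, pdx (pdx p) (x, y) * cexp (m * x) =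
      m ^ 2 * ∫ x in 0..Λ, p (x, y) * cexp (m * x) := by
  have hS : IsOpen ((univ : Set ℝ) ×ˢ U) := isOpen_univ.prod hU
  have hslice : ∀ {r : ℝ × ℝ → ℂ}, ContDiffOn ℝ 1 r (univ ×ˢ U) →
      ∀ x, HasDerivAt (fun t => r (t, y)) (pdx r (x, y)) x := fun hr x =>
    hasDerivAt_pdx (z := (x, y))
      ((hr.differentiableOn one_ne_zero).differentiableAt (hS.mem_nhds ⟨trivial, hy⟩))
  have hpx : ContDiffOn ℝ 1 (pdx p) (univ ×ˢ U) := contDiffOn_pdx hS hp (by norm_num)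
  have hper' : pdx p (Λ, y) = c * pdx p (0, y) := by
    simpa using pdx_add_period hper 0
  rw [integral_deriv_mul_cexp_of_quasiPeriodic (fun x _ => hslice hpx x)
      ((continuous_pdx_pdx_comp_mk_left hU hp hy).intervalIntegrable _ _) hper' hc,
    integral_deriv_mul_cexp_of_quasiPeriodic (fun x _ => hslice (hp.of_le one_le_two) x)
      ((hpx.continuousOn.continuous_comp_mk_left hy).intervalIntegrable _ _)
      (by simpa using hper 0) hc]
  ring

theorem integral_pdy_pdy_mul_cexp_of_helmholtz {κ : ℝ} (hU : IsOpen U)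
    (hp : ContDiffOn ℝ 2 p (univ ×ˢ U)) (hy : y ∈ U)
    (hHelm : ∀ x, lap p (x, y) + (κ : ℂ) ^ 2 * p (x, y) = 0)
    (hper : ∀ x, p (x + Λ, y) = c * p (x, y)) (hc : cexp (m * Λ) * c = 1) :
    ∫ x in 0..Λ, pdy (pdy p) (x, y) * cexp (m * x) =
      (-m ^ 2 - (κ : ℂ) ^ 2) * ∫ x in 0..Λ, p (x, y) * cexp (m * x) := by
  have hpc : Continuous fun x => p (x, y) := hp.continuousOn.continuous_comp_mk_left hy
  have hpxx := continuous_pdx_pdx_comp_mk_left hU hp hy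
  have hA : IntervalIntegrable (fun x => pdx (pdx p) (x, y) * cexp (m * x)) volume 0 Λ :=
    (hpxx.mul (by fun_prop)).intervalIntegrable _ _
  have hB : IntervalIntegrable (fun x => p (x, y) * cexp (m * x)) volume 0 Λ :=
    (hpc.mul (by fun_prop)).intervalIntegrable _ _
  have hpyy : ∀ x, pdy (pdy p) (x, y) * cexp (m * x) =
      -(κ : ℂ) ^ 2 * (p (x, y) * cexp (m * x)) - pdx (pdx p) (x, y) * cexp (m * x) := by
    intro x
    have h := hHelm x
    rw [lap] at h
    linear_combination cexp (m * x) * h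
  rw [intervalIntegral.integral_congr fun x _ => hpyy x,
    intervalIntegral.integral_sub (hB.const_mul _) hA, intervalIntegral.integral_const_mul,
    integral_pdx_pdx_mul_cexp hU hp hy hper hc]
  ring

end Strip

open intervalIntegral in
theorem fourier_mode_ode_general (Λ κ α : ℝ) (hΛ : 0 < Λ)
    (a b : ℝ) (p : ℝ × ℝ → ℂ)
    (hp : ContDiffOn ℝ 2 p (Set.univ ×ˢ Set.Ioo a b))
    (hHelm : ∀ z : ℝ × ℝ, z.2 ∈ Set.Ioo a b → lap p z + (κ : ℂ) ^ 2 * p z = 0)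
    (hqp : ∀ x : ℝ, ∀ y ∈ Set.Ioo a b,
      p (x + Λ, y) = Complex.exp (Complex.I * α * Λ) * p (x, y))
    (αn : ℤ → ℝ) (hαn : ∀ n : ℤ, αn n = α + 2 * Real.pi * n / Λ)
    (phat : ℤ → ℝ → ℂ)
    (hphat : ∀ n : ℤ, ∀ y : ℝ, phat n y
      = (1 / (Λ : ℂ)) * ∫ x in (0 : ℝ)..Λ, p (x, y) * Complex.exp (-Complex.I * (αn n) * x)) :
    ∀ n : ℤ, ∀ y ∈ Set.Ioo a b,
      DifferentiableAt ℝ (phat n) y ∧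
      DifferentiableAt ℝ (deriv (phat n)) y ∧
      deriv (deriv (phat n)) y + ((κ : ℂ) ^ 2 - ((αn n : ℝ) : ℂ) ^ 2) * phat n y = 0 := by
  intro n y₀ hy₀
  set m : ℂ := -I * αn n with hm
  set q : ℝ × ℝ → ℂ := fun z => p z * cexp (m * z.1)
  have hq : ContDiffOn ℝ 2 q (univ ×ˢ Ioo a b) := hp.mul
    (contDiff_const.mul (ofRealCLM.contDiff.comp contDiff_fst)).cexp.contDiffOn
  have hq' : ContDiffOn ℝ 1 (pdy q) (univ ×ˢ Ioo a b) :=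
    contDiffOn_pdy (isOpen_univ.prod isOpen_Ioo) hq (by norm_num)
  have hderiv : ∀ y ∈ Ioo a b, HasDerivAt (phat n) ((1 / Λ) * ∫ x in 0..Λ, pdy q (x, y)) y :=
    fun y hy => funext (hphat n) ▸
      (hasDerivAt_intervalIntegral_pdy isOpen_Ioo (hq.of_le one_le_two) 0 Λ hy).const_mul _
  have hderiv_eq : deriv (phat n) =ᶠ[nhds y₀] fun y => (1 / Λ) * ∫ x in 0..Λ, pdy q (x, y) :=
    Filter.eventually_of_mem (isOpen_Ioo.mem_nhds hy₀) fun y hy => (hderiv y hy).deriv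
  have hderiv2 := (hasDerivAt_intervalIntegral_pdy isOpen_Ioo hq' 0 Λ hy₀).const_mul (1 / (Λ : ℂ))
  have hc : cexp (m * Λ) * cexp (I * α * Λ) = 1 := by
    rw [← Complex.exp_add, ← Complex.exp_int_mul_two_pi_mul_I (-n), hm, hαn n]
    congr 1
    have hΛ' : (Λ : ℂ) ≠ 0 := by exact_mod_cast hΛ.ne'
    push_cast
    field_simp
    ring
  refine ⟨(hderiv y₀ hy₀).differentiableAt,
    hderiv_eq.differentiableAt_iff.2 hderiv2.differentiableAt, ?_⟩
  rw [hderiv_eq.deriv_eq, hderiv2.deriv, pdy_mul_comp_fst p fun x => cexp (m * x),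
    pdy_mul_comp_fst (pdy p) fun x => cexp (m * x),
    integral_pdy_pdy_mul_cexp_of_helmholtz isOpen_Ioo hp hy₀ (fun x => hHelm (x, y₀) hy₀)
      (fun x => hqp x y₀ hy₀) hc, hphat n y₀, hm]
  ring_nf
  simp only [I_sq]
  ring

open intervalIntegral in
/-- Fourier coefficients of an α-quasi-periodic Helmholtz solution satisfy the
ODE `p̂ₙ'' + (κ² − αₙ²) p̂ₙ = 0` on the interval `I = (a,b)`. -/
theorem fourier_mode_ode (Λ κ α : ℝ) (hΛ : 0 < Λ) (hκ : 0 < κ)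
    (a b : ℝ) (p : ℝ × ℝ → ℂ)
    (hp : ContDiffOn ℝ 2 p (Set.univ ×ˢ Set.Ioo a b))
    (hHelm : ∀ z : ℝ × ℝ, z.2 ∈ Set.Ioo a b → lap p z + (κ : ℂ) ^ 2 * p z = 0)
    (hqp : ∀ x : ℝ, ∀ y ∈ Set.Ioo a b,
      p (x + Λ, y) = Complex.exp (Complex.I * α * Λ) * p (x, y))
    (αn : ℤ → ℝ) (hαn : ∀ n : ℤ, αn n = α + 2 * Real.pi * n / Λ)
    (phat : ℤ → ℝ → ℂ)
    (hphat : ∀ n : ℤ, ∀ y : ℝ, phat n y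
      = (1 / (Λ : ℂ)) * ∫ x in (0 : ℝ)..Λ, p (x, y) * Complex.exp (-Complex.I * (αn n) * x)) :
    ∀ n : ℤ, ∀ y ∈ Set.Ioo a b,
      DifferentiableAt ℝ (phat n) y ∧
      DifferentiableAt ℝ (deriv (phat n)) y ∧
      deriv (deriv (phat n)) y + ((κ : ℂ) ^ 2 - ((αn n : ℝ) : ℂ) ^ 2) * phat n y = 0 :=
  fourier_mode_ode_general Λ κ α hΛ a b p hp hHelm hqp αn hαn phat hphat
end
end

section
/- Let Λ > 0, κ > 0, α ∈ ℝ, αₙ = α + 2πn/Λ, and βₙ = √(κ² − αₙ²) if |αₙ| < κ and βₙ = i √(αₙ² − κ²) if |αₙ| > κ, with κ ≠ |αₙ| for all n ∈ ℤ. Then for all x, s ∈ ℝ and all y ≠ t, the family ((1/βₙ) e^{i αₙ (x − s) + i βₙ |y − t|})_{n ∈ ℤ} is absolutely summable, so the quasi-periodic Green function G(x, y; s, t) = (i/(2Λ)) Σ_{n ∈ ℤ} (1/βₙ) e^{i αₙ (x − s) + i βₙ |y − t|} is well defined for (x, y) ≠ (s, t) with y ≠ t. -/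
noncomputable section

/-- The quasi-periodic frequencies `αₙ = α + 2πn/Λ`. -/
def αq (Λ α : ℝ) (n : ℤ) : ℝ := α + 2 * Real.pi * n / Λ

/-- The Rayleigh exponents: `βₙ = √(κ² − αₙ²)` if `|αₙ| < κ`,
and `βₙ = i√(αₙ² − κ²)` if `|αₙ| > κ`. -/
def βq (Λ κ α : ℝ) (n : ℤ) : ℂ :=
  if |αq Λ α n| < κ then ((Real.sqrt (κ ^ 2 - (αq Λ α n) ^ 2) : ℝ) : ℂ)
  else Complex.I * ((Real.sqrt ((αq Λ α n) ^ 2 - κ ^ 2) : ℝ) : ℂ)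

/-!
Only finitely many modes propagate. For all other `n` the exponent is `βₙ = i bₙ` with
`bₙ = √(αₙ² − κ²) ≥ |αₙ| − κ`, which grows linearly in `|n|`, so the term has modulus
`bₙ⁻¹ e^{−bₙ|y − t|}` and is dominated by a two-sided geometric series as soon as `y ≠ t`.
-/

open Complex Filter

lemma norm_one_div_mul_exp_I_mul (β : ℂ) (a x s d : ℝ) :
    ‖(1 / β) * exp (I * a * (x - s) + I * β * d)‖ = ‖β‖⁻¹ * Real.exp (-(β.im * d)) := by
  simp [norm_exp, mul_re, mul_im]

lemma Real.abs_sub_le_sqrt_sq_sub_sq {a κ : ℝ} (hκ : 0 ≤ κ) : |a| - κ ≤ √(a ^ 2 - κ ^ 2) := by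
  rcases le_total |a| κ with h | h
  · exact (sub_nonpos.2 h).trans (Real.sqrt_nonneg _)
  · refine Real.le_sqrt_of_sq_le ?_
    nlinarith [sq_abs a]

lemma summable_exp_sub_mul_abs {c : ℝ} (hc : 0 < c) (C : ℝ) :
    Summable fun n : ℤ => Real.exp (C - c * |(n : ℝ)|) := by
  have h : Summable fun n : ℕ => Real.exp (C - c * n) := by
    refine ((Real.summable_exp_nat_mul_iff.2 (neg_lt_zero.2 hc)).mul_left (Real.exp C)).congr
      fun n => ?_
    rw [← Real.exp_add]
    ring_nf
  exact .of_nat_of_neg (by simpa using h) (by simpa using h)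

lemma sub_le_abs_αq (Λ α : ℝ) (n : ℤ) : 2 * Real.pi * |(n : ℝ)| / |Λ| - |α| ≤ |αq Λ α n| := by
  have h : |2 * Real.pi * n / Λ| = 2 * Real.pi * |(n : ℝ)| / |Λ| := by
    rw [abs_div, abs_mul, abs_of_pos Real.two_pi_pos]
  calc 2 * Real.pi * |(n : ℝ)| / |Λ| - |α| = |αq Λ α n - α| - |α| := by
        rw [αq, add_sub_cancel_left, h]
    _ ≤ |αq Λ α n| := by linarith [abs_sub (αq Λ α n) α]

lemma im_βq (Λ κ α : ℝ) (n : ℤ) : (βq Λ κ α n).im = √(αq Λ α n ^ 2 - κ ^ 2) := by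
  unfold βq
  split_ifs with h
  · have : αq Λ α n ^ 2 - κ ^ 2 ≤ 0 := by nlinarith [sq_abs (αq Λ α n), abs_nonneg (αq Λ α n)]
    simp [Real.sqrt_eq_zero'.2 this]
  · simp

lemma sub_le_im_βq {κ : ℝ} (hκ : 0 ≤ κ) (Λ α : ℝ) (n : ℤ) :
    2 * Real.pi * |(n : ℝ)| / |Λ| - |α| - κ ≤ (βq Λ κ α n).im := by
  rw [im_βq]
  linarith [sub_le_abs_αq Λ α n, Real.abs_sub_le_sqrt_sq_sub_sq (a := αq Λ α n) hκ]

lemma eventually_one_le_norm_βq {Λ κ : ℝ} (hΛ : Λ ≠ 0) (hκ : 0 ≤ κ) (α : ℝ) :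
    ∀ᶠ n in cofinite, 1 ≤ ‖βq Λ κ α n‖ := by
  have habs : Tendsto (fun n : ℤ => |(n : ℝ)|) cofinite atTop := by
    have := tendsto_norm_cocompact_atTop (E := ℤ)
    rw [cocompact_eq_cofinite] at this
    exact this.congr Int.norm_eq_abs
  have hgrow := ((habs.const_mul_atTop Real.two_pi_pos).atTop_div_const
    (abs_pos.2 hΛ)).eventually_ge_atTop (1 + |α| + κ)
  filter_upwards [hgrow] with n hn
  linarith [sub_le_im_βq hκ Λ α n, im_le_norm (βq Λ κ α n)]

theorem green_function_series_abs_summable_general (Λ κ α : ℝ) (hΛ : 0 < Λ) (hκ : 0 < κ) :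
    ∀ x s y t : ℝ, y ≠ t →
      Summable (fun n : ℤ =>
        ‖(1 / βq Λ κ α n) * Complex.exp (Complex.I * (αq Λ α n : ℝ) * ((x : ℂ) - (s : ℂ))
          + Complex.I * βq Λ κ α n * (|y - t| : ℝ))‖) := by
  intro x s y t hyt
  set d := |y - t|
  have hd : 0 < d := abs_pos.2 (sub_ne_zero.2 hyt)
  refine .of_norm_bounded_eventually
    (summable_exp_sub_mul_abs (by positivity : 0 < 2 * Real.pi * d / |Λ|) ((|α| + κ) * d)) ?_
  filter_upwards [eventually_one_le_norm_βq hΛ.ne' hκ.le α] with n hβ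
  rw [norm_norm, norm_one_div_mul_exp_I_mul]
  have hdecay : -((βq Λ κ α n).im * d) ≤ (|α| + κ) * d - 2 * Real.pi * d / |Λ| * |(n : ℝ)| := by
    have := mul_le_mul_of_nonneg_right (sub_le_im_βq hκ.le Λ α n) hd.le
    have : (2 * Real.pi * |(n : ℝ)| / |Λ| - |α| - κ) * d
        = 2 * Real.pi * d / |Λ| * |(n : ℝ)| - (|α| + κ) * d := by ring
    linarith
  exact (mul_le_of_le_one_left (Real.exp_pos _).le (inv_le_one_of_one_le₀ hβ)).trans
    (Real.exp_le_exp.2 hdecay)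

/-- the series defining the quasi-periodic Green function converges absolutely
for `y ≠ t`, so `G(x,y;s,t) = (i/(2Λ)) Σₙ (1/βₙ) e^{iαₙ(x−s)+iβₙ|y−t|}` is well defined. -/
theorem green_function_series_abs_summable (Λ κ α : ℝ) (hΛ : 0 < Λ) (hκ : 0 < κ)
    (hWood : ∀ n : ℤ, κ ≠ |αq Λ α n|) :
    ∀ x s y t : ℝ, y ≠ t →
      Summable (fun n : ℤ =>
        ‖(1 / βq Λ κ α n) * Complex.exp (Complex.I * (αq Λ α n : ℝ) * ((x : ℂ) - (s : ℂ))
          + Complex.I * βq Λ κ α n * (|y - t| : ℝ))‖) :=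
  green_function_series_abs_summable_general Λ κ α hΛ hκ
end
end
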